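/- Let U ⊆ ℝⁿ be a bounded open set with positive measure, m ∈ ℕ, 1 ≤ p < ∞, and u ∈ W^{m,p}(U). Define recursively p₀[u] = mean of u over U, and for 0 < ℓ ≤ m, q_ℓ[u](x) = Σ_{|α|=ℓ} (1/α!) μ(∂^α u, U) x^α and p_ℓ[u] = q_ℓ[u] + p_{ℓ-1}[u - q_ℓ[u]]. Then p_ℓ[u] is a polynomial of degree at most ℓ and μ(∂^α(u - p_ℓ[u]), U) = 0 for all multi-indices α with |α| ≤ ℓ, for every 0 ≤ ℓ ≤ m. -/

import Mathlib

open MeasureTheory Real Set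

noncomputable section

variable {n : ℕ}

/-- Partial derivative in the `i`-th coordinate direction. -/
def pd (i : Fin n) (f : EuclideanSpace ℝ (Fin n) → ℝ) :
    EuclideanSpace ℝ (Fin n) → ℝ :=
  fun x => fderiv ℝ f x (EuclideanSpace.single i 1)

/-- Iterated partial derivative along a list of coordinate directions. -/
def pdList : List (Fin n) → (EuclideanSpace ℝ (Fin n) → ℝ) →
    (EuclideanSpace ℝ (Fin n) → ℝ)
  | [], f => f
  | i :: l, f => pd i (pdList l f)

/-- Canonical list representing the multi-index `α` (so `pdList (mList α) = ∂^α`). -/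
def mList (α : Fin n → ℕ) : List (Fin n) :=
  (List.finRange n).flatMap fun i => List.replicate (α i) i

/-- The finset of multi-indices `α` with `|α| = ℓ`. -/
def multiIdxEq (n ℓ : ℕ) : Finset (Fin n → ℕ) :=
  (Fintype.piFinset fun _ => Finset.range (ℓ + 1)).filter fun α => (∑ i, α i) = ℓ

/-- The finset of multi-indices `α` with `|α| ≤ ℓ`. -/
def multiIdxLe (n ℓ : ℕ) : Finset (Fin n → ℕ) :=
  (Fintype.piFinset fun _ => Finset.range (ℓ + 1)).filter fun α => (∑ i, α i) ≤ ℓ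

/-- The monomial `x^α`. -/
def monomial (α : Fin n → ℕ) (x : EuclideanSpace ℝ (Fin n)) : ℝ :=
  ∏ i, (x i) ^ (α i)

/-- `α! = ∏ (α i)!`. -/
def mfact (α : Fin n → ℕ) : ℕ := ∏ i, Nat.factorial (α i)

/-- Mean value of `u` over `U`. -/
def mval (U : Set (EuclideanSpace ℝ (Fin n))) (u : EuclideanSpace ℝ (Fin n) → ℝ) : ℝ :=
  (∫ y in U, u y) / (volume U).toReal

/-- `q_ℓ[u](x) = Σ_{|α|=ℓ} (1/α!) μ(∂^α u, U) x^α`. -/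
def qpoly (U : Set (EuclideanSpace ℝ (Fin n))) (ℓ : ℕ)
    (u : EuclideanSpace ℝ (Fin n) → ℝ) (x : EuclideanSpace ℝ (Fin n)) : ℝ :=
  ∑ α ∈ multiIdxEq n ℓ, (1 / (mfact α : ℝ)) * mval U (pdList (mList α) u) * monomial α x

/-- The recursively defined polynomials `p_ℓ[u]`:
`p₀[u] = μ(u, U)` and `p_ℓ[u] = q_ℓ[u] + p_{ℓ-1}[u - q_ℓ[u]]`. -/
def polyApprox (U : Set (EuclideanSpace ℝ (Fin n)))
    (u : EuclideanSpace ℝ (Fin n) → ℝ) :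
    ℕ → (EuclideanSpace ℝ (Fin n) → ℝ)
  | 0 => fun _ => mval U u
  | (ℓ + 1) => fun x =>
      qpoly U (ℓ + 1) u x + polyApprox U (fun y => u y - qpoly U (ℓ + 1) u y) ℓ x

lemma contDiff_monomial (β : Fin n → ℕ) {N : WithTop ℕ∞} : ContDiff ℝ N (monomial β) := by
  unfold monomial
  exact contDiff_prod fun i _ =>
    ((EuclideanSpace.proj i : EuclideanSpace ℝ (Fin n) →L[ℝ] ℝ).contDiff).pow _

lemma pd_contDiff {k : ℕ∞} {g : EuclideanSpace ℝ (Fin n) → ℝ} (i : Fin n)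
    (hg : ContDiff ℝ (k + 1) g) : ContDiff ℝ k (pd i g) :=
  (hg.fderiv_right le_rfl).clm_apply contDiff_const

lemma pdList_contDiff {k : ℕ} (l : List (Fin n)) {f : EuclideanSpace ℝ (Fin n) → ℝ}
    (hf : ContDiff ℝ ((k + l.length : ℕ) : ℕ∞) f) : ContDiff ℝ (k : ℕ∞) (pdList l f) := by
  induction l generalizing k with
  | nil => simpa [pdList] using hf
  | cons i l ih =>
    have h1 : ContDiff ℝ (((k + 1) : ℕ) : ℕ∞) (pdList l f) := by
      apply ih
      have e : (k + 1) + l.length = k + (i :: l).length := by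
        simp [List.length_cons]; omega
      rw [e]; exact hf
    exact pd_contDiff i (by exact_mod_cast h1)

lemma pdList_contDiff_top (l : List (Fin n)) {f : EuclideanSpace ℝ (Fin n) → ℝ}
    (hf : ContDiff ℝ ((⊤ : ℕ∞) : WithTop ℕ∞) f) :
    ContDiff ℝ ((⊤ : ℕ∞) : WithTop ℕ∞) (pdList l f) := by
  induction l with
  | nil => exact hf
  | cons i l ih =>
    have e : ((⊤ : ℕ∞) : WithTop ℕ∞) + 1 = ((⊤ : ℕ∞) : WithTop ℕ∞) := by norm_cast
    exact pd_contDiff i (by rw [e]; exact ih)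

lemma diff_pdList_top (l : List (Fin n)) {f : EuclideanSpace ℝ (Fin n) → ℝ}
    (hf : ContDiff ℝ ((⊤ : ℕ∞) : WithTop ℕ∞) f) : Differentiable ℝ (pdList l f) :=
  (pdList_contDiff_top l hf).differentiable (by simp)

lemma hasFDerivAt_monomial (β : Fin n → ℕ) (x : EuclideanSpace ℝ (Fin n)) :
    HasFDerivAt (monomial β)
      (∑ j, (∏ k ∈ Finset.univ.erase j, (x k) ^ (β k)) •
        (((β j : ℝ) * x j ^ (β j - 1)) • (EuclideanSpace.proj j : EuclideanSpace ℝ (Fin n) →L[ℝ] ℝ))) x := by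
  have h : ∀ j ∈ (Finset.univ : Finset (Fin n)),
      HasFDerivAt (fun y : EuclideanSpace ℝ (Fin n) => (y j) ^ (β j))
        (((β j : ℝ) * x j ^ (β j - 1)) • (EuclideanSpace.proj j : EuclideanSpace ℝ (Fin n) →L[ℝ] ℝ)) x := by
    intro j _
    exact (hasDerivAt_pow (β j) (x j)).comp_hasFDerivAt x
      ((EuclideanSpace.proj j : EuclideanSpace ℝ (Fin n) →L[ℝ] ℝ).hasFDerivAt)
  exact HasFDerivAt.finset_prod h

lemma pd_monomial (i : Fin n) (β : Fin n → ℕ) :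
    pd i (monomial β) = fun x => (β i : ℝ) * monomial (Function.update β i (β i - 1)) x := by
  funext x
  have h := hasFDerivAt_monomial β x
  rw [pd, h.fderiv]
  rw [ContinuousLinearMap.sum_apply]
  rw [Finset.sum_eq_single i]
  · simp only [ContinuousLinearMap.smul_apply]
    have hp : (EuclideanSpace.proj i : EuclideanSpace ℝ (Fin n) →L[ℝ] ℝ)
        (EuclideanSpace.single i 1) = 1 := by
      simp [EuclideanSpace.single_apply]
    rw [hp]
    have hm : monomial (Function.update β i (β i - 1)) x
        = x i ^ (β i - 1) * ∏ k ∈ Finset.univ.erase i, (x k) ^ (β k) := by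
      rw [monomial, ← Finset.mul_prod_erase Finset.univ _ (Finset.mem_univ i)]
      simp only [Function.update_self]
      congr 1
      apply Finset.prod_congr rfl
      intro k hk
      rw [Function.update_of_ne (Finset.ne_of_mem_erase hk)]
    simp only [smul_eq_mul]
    rw [hm]; ring
  · intro j _ hj
    simp only [ContinuousLinearMap.smul_apply]
    have hp : (EuclideanSpace.proj j : EuclideanSpace ℝ (Fin n) →L[ℝ] ℝ)
        (EuclideanSpace.single i 1) = 0 := by
      simp [EuclideanSpace.single_apply, hj]
    rw [hp]; simp
  · intro h; exact absurd (Finset.mem_univ i) h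

lemma pd_fun_sub {f g : EuclideanSpace ℝ (Fin n) → ℝ} (i : Fin n)
    (hf : Differentiable ℝ f) (hg : Differentiable ℝ g) :
    pd i (fun x => f x - g x) = fun x => pd i f x - pd i g x := by
  funext x
  simp only [pd]
  rw [fderiv_fun_sub (hf x) (hg x)]
  rfl

lemma pd_const_mul {f : EuclideanSpace ℝ (Fin n) → ℝ} (i : Fin n) (c : ℝ)
    (hf : Differentiable ℝ f) :
    pd i (fun x => c * f x) = fun x => c * pd i f x := by
  funext x
  simp only [pd]
  rw [fderiv_const_mul (hf x)]
  rfl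

lemma pd_fun_sum {ι : Type*} {s : Finset ι} {F : ι → EuclideanSpace ℝ (Fin n) → ℝ} (i : Fin n)
    (hF : ∀ b ∈ s, Differentiable ℝ (F b)) :
    pd i (fun x => ∑ b ∈ s, F b x) = fun x => ∑ b ∈ s, pd i (F b) x := by
  funext x
  simp only [pd]
  rw [fderiv_fun_sum (fun b hb => (hF b hb) x)]
  simp

lemma pdList_fun_sub {f g : EuclideanSpace ℝ (Fin n) → ℝ} (l : List (Fin n))
    (hf : ContDiff ℝ ((l.length : ℕ) : ℕ∞) f) (hg : ContDiff ℝ ((l.length : ℕ) : ℕ∞) g) :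
    pdList l (fun x => f x - g x) = fun x => pdList l f x - pdList l g x := by
  induction l with
  | nil => rfl
  | cons i l ih =>
    have e : (1 + l.length : ℕ) = (i :: l).length := by
      simp [List.length_cons, Nat.add_comm]
    have h1 : ContDiff ℝ ((1 + l.length : ℕ) : ℕ∞) f := by rw [e]; exact hf
    have h2 : ContDiff ℝ ((1 + l.length : ℕ) : ℕ∞) g := by rw [e]; exact hg
    have hlen : (l.length : ℕ) ≤ (i :: l).length := by omega
    have df : Differentiable ℝ (pdList l f) :=
      (pdList_contDiff (k := 1) l h1).differentiable (by simp)
    have dg : Differentiable ℝ (pdList l g) :=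
      (pdList_contDiff (k := 1) l h2).differentiable (by simp)
    show pd i (pdList l (fun x => f x - g x)) = _
    rw [ih (hf.of_le (by exact_mod_cast Nat.cast_le.mpr hlen))
        (hg.of_le (by exact_mod_cast Nat.cast_le.mpr hlen))]
    exact pd_fun_sub i df dg

lemma pdList_const_mul {f : EuclideanSpace ℝ (Fin n) → ℝ} (l : List (Fin n)) (c : ℝ)
    (hf : ContDiff ℝ ((⊤ : ℕ∞) : WithTop ℕ∞) f) :
    pdList l (fun x => c * f x) = fun x => c * pdList l f x := by
  induction l with
  | nil => rfl
  | cons i l ih =>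
    show pd i (pdList l (fun x => c * f x)) = _
    rw [ih]
    exact pd_const_mul i c (diff_pdList_top l hf)

lemma pdList_fun_sum {ι : Type*} {s : Finset ι} {F : ι → EuclideanSpace ℝ (Fin n) → ℝ}
    (l : List (Fin n)) (hF : ∀ b ∈ s, ContDiff ℝ ((⊤ : ℕ∞) : WithTop ℕ∞) (F b)) :
    pdList l (fun x => ∑ b ∈ s, F b x) = fun x => ∑ b ∈ s, pdList l (F b) x := by
  induction l with
  | nil => rfl
  | cons i l ih =>
    show pd i (pdList l (fun x => ∑ b ∈ s, F b x)) = _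
    rw [ih]
    exact pd_fun_sum i (fun b hb => diff_pdList_top l (hF b hb))

lemma pdList_replicate_monomial (k : ℕ) (i : Fin n) (β : Fin n → ℕ) :
    pdList (List.replicate k i) (monomial β)
      = fun x => (((β i).descFactorial k : ℕ) : ℝ) *
          monomial (Function.update β i (β i - k)) x := by
  induction k with
  | zero =>
    funext x
    simp [pdList, Function.update_eq_self]
  | succ k ih =>
    show pd i (pdList (List.replicate k i) (monomial β)) = _
    rw [ih]
    rw [pd_const_mul i _ ((contDiff_monomial (N := ⊤) _).differentiable (by simp))]
    rw [pd_monomial]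
    funext x
    rw [Function.update_idem]
    have hval : Function.update β i (β i - k) i = β i - k := Function.update_self i _ β
    rw [hval]
    have : (β i).descFactorial (k + 1) = (β i - k) * (β i).descFactorial k :=
      Nat.descFactorial_succ (β i) k
    rw [this]
    have : β i - k - 1 = β i - (k + 1) := by omega
    rw [this]
    push_cast
    ring

lemma pdList_append (l₁ l₂ : List (Fin n)) (f : EuclideanSpace ℝ (Fin n) → ℝ) :
    pdList (l₁ ++ l₂) f = pdList l₁ (pdList l₂ f) := by
  induction l₁ with
  | nil => rfl
  | cons i l ih =>
    show pd i (pdList (l ++ l₂) f) = pd i (pdList l (pdList l₂ f))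
    rw [ih]

lemma pdList_flatMap_monomial (L : List (Fin n)) (hL : L.Nodup) (α β : Fin n → ℕ) :
    pdList (L.flatMap fun i => List.replicate (α i) i) (monomial β)
      = fun x => ((∏ i ∈ L.toFinset, (β i).descFactorial (α i) : ℕ) : ℝ) *
          monomial (fun j => if j ∈ L then β j - α j else β j) x := by
  induction L with
  | nil =>
    funext x
    simp [pdList, monomial]
  | cons i L ih =>
    have hi : i ∉ L := (List.nodup_cons.mp hL).1
    have hL' : L.Nodup := (List.nodup_cons.mp hL).2
    rw [List.flatMap_cons, pdList_append, ih hL']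
    rw [pdList_const_mul _ _ (contDiff_monomial _)]
    rw [pdList_replicate_monomial]
    funext x
    have hupd : Function.update (fun j => if j ∈ L then β j - α j else β j) i
        ((if i ∈ L then β i - α i else β i) - α i)
        = fun j => if j ∈ (i :: L) then β j - α j else β j := by
      funext j
      by_cases hj : j = i
      · subst hj; simp [hi]
      · rw [Function.update_of_ne hj]
        simp [List.mem_cons, hj]
    rw [hupd]
    have hci : (if i ∈ L then β i - α i else β i) = β i := by simp [hi]
    rw [hci]
    have hprod : ∏ j ∈ (i :: L).toFinset, (β j).descFactorial (α j)
        = (β i).descFactorial (α i) * ∏ j ∈ L.toFinset, (β j).descFactorial (α j) := by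
      rw [List.toFinset_cons, Finset.prod_insert (by simpa using hi)]
    rw [hprod]
    push_cast
    ring

lemma pdList_mList_monomial (α β : Fin n → ℕ) :
    pdList (mList α) (monomial β)
      = fun x => ((∏ i, (β i).descFactorial (α i) : ℕ) : ℝ) *
          monomial (fun j => β j - α j) x := by
  rw [mList, pdList_flatMap_monomial _ (List.nodup_finRange n)]
  have h1 : (List.finRange n).toFinset = (Finset.univ : Finset (Fin n)) := by
    ext j; simp [List.mem_finRange]
  have h2 : (fun j => if j ∈ List.finRange n then β j - α j else β j)
      = fun j => β j - α j := by
    funext j; simp [List.mem_finRange]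
  rw [h1, h2]

lemma pdList_mList_monomial_of_sum_le {α β : Fin n → ℕ} (h : (∑ i, β i) ≤ ∑ i, α i) :
    pdList (mList α) (monomial β)
      = fun _ => if α = β then (mfact α : ℝ) else 0 := by
  rw [pdList_mList_monomial]
  by_cases hab : α = β
  · subst hab
    funext x
    rw [if_pos rfl]
    have h2 : (fun j => α j - α j) = fun _ => (0 : ℕ) := by funext j; omega
    rw [h2]
    have h3 : monomial (fun _ => (0 : ℕ)) x = 1 := by simp [monomial]
    rw [h3, mul_one]
    congr 1
    rw [mfact]
    exact Finset.prod_congr rfl fun i _ => Nat.descFactorial_self (α i)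
  · have : ∃ i, β i < α i := by
      by_contra hcon
      push_neg at hcon
      have hle : ∀ i ∈ Finset.univ, α i ≤ β i := fun i _ => hcon i
      have hne : ∃ i ∈ Finset.univ, α i ≠ β i := by
        by_contra hcon2
        push_neg at hcon2
        exact hab (funext fun i => hcon2 i (Finset.mem_univ i))
      obtain ⟨i, _, hi⟩ := hne
      have : (∑ j, α j) < ∑ j, β j :=
        Finset.sum_lt_sum hle ⟨i, Finset.mem_univ i, lt_of_le_of_ne (hcon i) hi⟩
      omega
    obtain ⟨i, hi⟩ := this
    have : ∏ j, (β j).descFactorial (α j) = 0 := by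
      apply Finset.prod_eq_zero (Finset.mem_univ i)
      exact Nat.descFactorial_eq_zero_iff_lt.mpr hi
    funext x
    rw [this, if_neg hab]
    simp

lemma mem_multiIdxEq {α : Fin n → ℕ} {ℓ : ℕ} :
    α ∈ multiIdxEq n ℓ ↔ (∑ i, α i) = ℓ := by
  simp only [multiIdxEq, Finset.mem_filter, Fintype.mem_piFinset, Finset.mem_range]
  refine ⟨fun h => h.2, fun h => ⟨fun i => ?_, h⟩⟩
  have : α i ≤ ∑ j, α j := Finset.single_le_sum (fun j _ => Nat.zero_le _) (Finset.mem_univ i)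
  omega

lemma mem_multiIdxLe {α : Fin n → ℕ} {ℓ : ℕ} :
    α ∈ multiIdxLe n ℓ ↔ (∑ i, α i) ≤ ℓ := by
  simp only [multiIdxLe, Finset.mem_filter, Fintype.mem_piFinset, Finset.mem_range]
  refine ⟨fun h => h.2, fun h => ⟨fun i => ?_, h⟩⟩
  have : α i ≤ ∑ j, α j := Finset.single_le_sum (fun j _ => Nat.zero_le _) (Finset.mem_univ i)
  omega

lemma length_mList (α : Fin n → ℕ) : (mList α).length = ∑ i, α i := by
  rw [mList, List.length_flatMap]
  rw [Fin.sum_univ_def]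
  congr 1
  apply List.map_congr_left
  intro i _
  simp

lemma mfact_pos (α : Fin n → ℕ) : 0 < mfact α :=
  Finset.prod_pos fun i _ => Nat.factorial_pos (α i)

lemma mList_zero {α : Fin n → ℕ} (h : ∀ i, α i = 0) : mList α = [] := by
  have : (mList α).length = 0 := by rw [length_mList]; simp [h]
  exact List.length_eq_zero_iff.mp this

section Mval
variable {U : Set (EuclideanSpace ℝ (Fin n))}

lemma integrableOn_of_continuous (hUbdd : Bornology.IsBounded U)
    {f : EuclideanSpace ℝ (Fin n) → ℝ} (hf : Continuous f) :
    IntegrableOn f U volume := by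
  have hK : IsCompact (closure U) := hUbdd.isCompact_closure
  exact (hf.continuousOn.integrableOn_compact hK).mono_set subset_closure

lemma volume_ne_top (hUbdd : Bornology.IsBounded U) : volume U ≠ ⊤ := by
  have hK : IsCompact (closure U) := hUbdd.isCompact_closure
  exact ne_top_of_le_ne_top hK.measure_lt_top.ne (measure_mono subset_closure)

lemma mval_sub_const (hUbdd : Bornology.IsBounded U) (hUpos : 0 < volume U)
    {f : EuclideanSpace ℝ (Fin n) → ℝ} (hf : IntegrableOn f U volume) :
    mval U (fun y => f y - mval U f) = 0 := by
  have hfin := volume_ne_top (U := U) hUbdd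
  have hT : (volume U).toReal ≠ 0 := (ENNReal.toReal_pos hUpos.ne' hfin).ne'
  have hconst : IntegrableOn (fun _ => mval U f) U volume :=
    integrableOn_const hfin
  have h1 : ∫ y in U, (f y - mval U f) ∂volume
      = (∫ y in U, f y ∂volume) - (volume U).toReal * mval U f := by
    rw [integral_sub hf hconst, setIntegral_const, smul_eq_mul, measureReal_def]
  rw [mval, h1, mval]
  field_simp
  ring

end Mval

lemma key (U : Set (EuclideanSpace ℝ (Fin n)))
    (hUbdd : Bornology.IsBounded U) (hUpos : 0 < volume U) (m : ℕ) :
    ∀ ℓ : ℕ, ∀ u : EuclideanSpace ℝ (Fin n) → ℝ, ContDiff ℝ (m : ℕ∞) u → ℓ ≤ m →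
      (∃ c : (Fin n → ℕ) → ℝ, ∀ x,
        polyApprox U u ℓ x = ∑ α ∈ multiIdxLe n ℓ, c α * monomial α x) ∧
      (∀ α : Fin n → ℕ, (∑ i, α i) ≤ ℓ →
        mval U (pdList (mList α) (fun y => u y - polyApprox U u ℓ y)) = 0) := by
  intro ℓ
  induction ℓ with
  | zero =>
    intro u hu _
    constructor
    · refine ⟨fun _ => mval U u, fun x => ?_⟩
      have hLe0 : multiIdxLe n 0 = {fun _ => 0} := by
        ext α
        rw [mem_multiIdxLe, Finset.mem_singleton]
        constructor
        · intro h
          funext i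
          have : α i ≤ ∑ j, α j :=
            Finset.single_le_sum (fun j _ => Nat.zero_le _) (Finset.mem_univ i)
          omega
        · intro h; subst h; simp
      rw [hLe0, Finset.sum_singleton]
      have : monomial (fun _ => (0 : ℕ)) x = 1 := by simp [monomial]
      rw [this, mul_one]
      rfl
    · intro α hα
      have hz : ∀ i, α i = 0 := by
        intro i
        have : α i ≤ ∑ j, α j :=
          Finset.single_le_sum (fun j _ => Nat.zero_le _) (Finset.mem_univ i)
        omega
      rw [mList_zero hz]
      show mval U (fun y => u y - mval U u) = 0
      exact mval_sub_const hUbdd hUpos (integrableOn_of_continuous hUbdd hu.continuous)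
  | succ ℓ ih =>
    intro u hu hl
    have hq : ContDiff ℝ ((m : ℕ∞) : WithTop ℕ∞) (qpoly U (ℓ + 1) u) := by
      unfold qpoly
      exact ContDiff.sum fun β _ => contDiff_const.mul (contDiff_monomial β)
    have hu' : ContDiff ℝ ((m : ℕ∞) : WithTop ℕ∞)
        (fun y => u y - qpoly U (ℓ + 1) u y) := hu.sub hq
    obtain ⟨⟨c, hc⟩, hmean⟩ := ih (fun y => u y - qpoly U (ℓ + 1) u y) hu' (by omega)
    set c' : (Fin n → ℕ) → ℝ := fun β =>
      if (∑ i, β i) = ℓ + 1 then (1 / (mfact β : ℝ)) * mval U (pdList (mList β) u)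
      else c β with hc'
    have hP : ∀ x, polyApprox U u (ℓ + 1) x
        = ∑ β ∈ multiIdxLe n (ℓ + 1), c' β * monomial β x := by
      intro x
      have hsplit := Finset.sum_filter_add_sum_filter_not (multiIdxLe n (ℓ + 1))
        (fun β => (∑ i, β i) = ℓ + 1) (fun β => c' β * monomial β x)
      have e1 : (multiIdxLe n (ℓ + 1)).filter (fun β => (∑ i, β i) = ℓ + 1)
          = multiIdxEq n (ℓ + 1) := by
        ext β
        simp only [Finset.mem_filter, mem_multiIdxLe, mem_multiIdxEq]
        omega
      have e2 : (multiIdxLe n (ℓ + 1)).filter (fun β => ¬ (∑ i, β i) = ℓ + 1)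
          = multiIdxLe n ℓ := by
        ext β
        simp only [Finset.mem_filter, mem_multiIdxLe]
        omega
      rw [← hsplit, e1, e2]
      have t1 : ∑ β ∈ multiIdxEq n (ℓ + 1), c' β * monomial β x
          = qpoly U (ℓ + 1) u x := by
        apply Finset.sum_congr rfl
        intro β hβ
        simp only [hc', mem_multiIdxEq.mp hβ, if_true]
      have t2 : ∑ β ∈ multiIdxLe n ℓ, c' β * monomial β x
          = polyApprox U (fun y => u y - qpoly U (ℓ + 1) u y) ℓ x := by
        have hcong : ∀ β ∈ multiIdxLe n ℓ, c' β * monomial β x = c β * monomial β x := by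
          intro β hβ
          have hne : ¬ ((∑ i, β i) = ℓ + 1) := by
            have := mem_multiIdxLe.mp hβ; omega
          simp only [hc', hne, if_false]
        rw [Finset.sum_congr rfl hcong, ← hc x]
      rw [t1, t2]
      rfl
    refine ⟨⟨c', hP⟩, ?_⟩
    intro α hα
    by_cases hcase : (∑ i, α i) = ℓ + 1
    · -- top-degree case
      have hmem : α ∈ multiIdxLe n (ℓ + 1) := mem_multiIdxLe.mpr hα
      have hlen : ((mList α).length : ℕ) ≤ m := by
        rw [length_mList]; omega
      have huα : ContDiff ℝ (((mList α).length : ℕ) : ℕ∞) u :=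
        hu.of_le (by exact_mod_cast Nat.cast_le.mpr hlen)
      set P : EuclideanSpace ℝ (Fin n) → ℝ :=
        fun x => ∑ β ∈ multiIdxLe n (ℓ + 1), c' β * monomial β x with hPdef
      have hPs : ContDiff ℝ ((⊤ : ℕ∞) : WithTop ℕ∞) P :=
        ContDiff.sum fun β _ => contDiff_const.mul (contDiff_monomial β)
      have hfun : (fun y => u y - polyApprox U u (ℓ + 1) y) = fun y => u y - P y := by
        funext y; rw [hP y]
      rw [hfun]
      rw [pdList_fun_sub (mList α) huα
        (hPs.of_le (by exact_mod_cast le_top))]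
      have hPd : pdList (mList α) P = fun _ => mval U (pdList (mList α) u) := by
        rw [hPdef]
        rw [pdList_fun_sum (mList α)
          (fun β _ => contDiff_const.mul (contDiff_monomial β))]
        funext x
        have hterm : ∀ β ∈ multiIdxLe n (ℓ + 1),
            pdList (mList α) (fun y => c' β * monomial β y) x
              = c' β * (if α = β then (mfact α : ℝ) else 0) := by
          intro β hβ
          rw [pdList_const_mul (mList α) (c' β) (contDiff_monomial β)]
          rw [pdList_mList_monomial_of_sum_le
            (le_of_le_of_eq (mem_multiIdxLe.mp hβ) hcase.symm)]
        rw [Finset.sum_congr rfl hterm]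
        rw [Finset.sum_eq_single α]
        · rw [if_pos rfl]
          simp only [hc', hcase, if_true]
          have : (mfact α : ℝ) ≠ 0 := by
            exact_mod_cast (mfact_pos α).ne'
          field_simp
        · intro β _ hβα
          rw [if_neg (fun h => hβα h.symm), mul_zero]
        · intro h; exact absurd hmem h
      rw [hPd]
      have hcont : Continuous (pdList (mList α) u) := by
        have : ContDiff ℝ ((0 : ℕ) : ℕ∞) (pdList (mList α) u) := by
          apply pdList_contDiff
          rw [Nat.zero_add]
          exact huα
        exact this.continuous
      exact mval_sub_const hUbdd hUpos (integrableOn_of_continuous hUbdd hcont)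
    · -- lower-degree case
      have hα' : (∑ i, α i) ≤ ℓ := by omega
      have hfun : (fun y => u y - polyApprox U u (ℓ + 1) y)
          = fun y => (u y - qpoly U (ℓ + 1) u y)
              - polyApprox U (fun z => u z - qpoly U (ℓ + 1) u z) ℓ y := by
        funext y
        show u y - polyApprox U u (ℓ + 1) y = _
        have : polyApprox U u (ℓ + 1) y
            = qpoly U (ℓ + 1) u y
              + polyApprox U (fun z => u z - qpoly U (ℓ + 1) u z) ℓ y := rfl
        rw [this]; ring
      rw [hfun]
      exact hmean α hα'


/-- Construction of mean-value matching polynomials: for `U ⊆ ℝⁿ` bounded open with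
positive measure and `u ∈ W^{m,p}(U)`, the recursively defined `p_ℓ[u]` is a polynomial
of degree at most `ℓ` and `μ(∂^α(u - p_ℓ[u]), U) = 0` for all multi-indices `|α| ≤ ℓ`,
for every `0 ≤ ℓ ≤ m`. -/
theorem polyApprox_mean_values (U : Set (EuclideanSpace ℝ (Fin n)))
    (hUopen : IsOpen U) (hUbdd : Bornology.IsBounded U) (hUpos : 0 < volume U)
    (m : ℕ) (p : ℝ) (hp : 1 ≤ p)
    (u : EuclideanSpace ℝ (Fin n) → ℝ) (hu : ContDiff ℝ (m : ℕ∞) u) :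
    ∀ ℓ : ℕ, ℓ ≤ m →
      (∃ c : (Fin n → ℕ) → ℝ, ∀ x,
        polyApprox U u ℓ x = ∑ α ∈ multiIdxLe n ℓ, c α * monomial α x) ∧
      (∀ α : Fin n → ℕ, (∑ i, α i) ≤ ℓ →
        mval U (pdList (mList α) (fun y => u y - polyApprox U u ℓ y)) = 0) := by
  intro ℓ hℓ
  exact key U hUbdd hUpos m ℓ u hu hℓ

end
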